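/- Let λ > 0, X ∈ ℝ^{n×p}, 2 ≤ r ≤ p, and weights w_{ℓm} > 0. Suppose β̂ with β̂_r > 0 is a minimizer of the r-th row subproblem with dual vectors (a^{(ℓ)}) satisfying the optimality (KKT) conditions and the strict dual feasibility ‖(a^{(ℓ)})_{g_ℓ}‖₂ < 1 for all ℓ = 1,…,J(β̂), where J(β̂) is the largest ℓ with β̂_1 = ⋯ = β̂_ℓ = 0. Let Ŝ = {i ∈ {1,…,r} : β̂_i ≠ 0}. If the submatrix X_Ŝ of X_{1:r} consisting of the columns indexed by Ŝ has full column rank |Ŝ|, then β̂ is the unique minimizer of the r-th row subproblem. -/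

import Mathlib

/-!
The objective is convex, strictly convex in the last coordinate and strictly convex along
directions that change the fit `X β`. Comparing two minimizers `β̂`, `β̃` with their midpoint
therefore shows that they share the last coordinate and the fit, hence also the penalty.
Pairing the stationarity equation with `β̃ - β̂` then gives
`∑ ℓ ⟨a⁽ˡ⁾, W⁽ˡ⁾ ∗ β̃⟩ = ∑ ℓ ‖W⁽ˡ⁾ ∗ β̃‖`, and as `‖a⁽ˡ⁾‖ ≤ 1` every term is tight. On a zero
group of `β̂` strict dual feasibility then forces `W⁽ˡ⁾ ∗ β̃ = 0`; on a nonzero group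
`W⁽ˡ⁾ ∗ β̃` is a multiple of `W⁽ˡ⁾ ∗ β̂`. Applied to the largest group this puts the support of
`β̃` inside `Ŝ`, and full column rank of `X_Ŝ` gives `β̃ = β̂`.
-/

open Matrix Finset
open scoped InnerProductSpace

section NormSubgradient

variable {E : Type*} [NormedAddCommGroup E] [InnerProductSpace ℝ E]

def IsStrictNormSubgrad (A v : E) : Prop :=
  (v = 0 ∧ ‖A‖ < 1) ∨ (v ≠ 0 ∧ A = ‖v‖⁻¹ • v)

namespace IsStrictNormSubgrad

variable {A v : E}

theorem norm_le_one (h : IsStrictNormSubgrad A v) : ‖A‖ ≤ 1 := by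
  rcases h with ⟨-, hA⟩ | ⟨hv, rfl⟩
  · exact hA.le
  · exact (norm_smul_inv_norm (𝕜 := ℝ) hv).le

theorem inner_eq_norm (h : IsStrictNormSubgrad A v) : ⟪A, v⟫_ℝ = ‖v‖ := by
  rcases h with ⟨rfl, -⟩ | ⟨hv, rfl⟩
  · simp
  · rw [real_inner_smul_left, real_inner_self_eq_norm_sq, sq,
      inv_mul_cancel_left₀ (norm_ne_zero_iff.mpr hv)]

theorem exists_eq_smul_of_inner_eq_norm (h : IsStrictNormSubgrad A v) {u : E}
    (hu : ⟪A, u⟫_ℝ = ‖u‖) : ∃ c : ℝ, u = c • v := by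
  rcases h with ⟨-, hA⟩ | ⟨hv, rfl⟩
  · refine ⟨0, ?_⟩
    rw [zero_smul, ← norm_le_zero_iff]
    by_contra! hpos
    nlinarith [real_inner_le_norm A u]
  · have hA : ‖‖v‖⁻¹ • v‖ = 1 := norm_smul_inv_norm hv
    rw [← one_mul ‖u‖, ← hA, inner_eq_norm_mul_iff_real, hA, one_smul, smul_smul] at hu
    exact ⟨_, hu.symm⟩

end IsStrictNormSubgrad

theorem Finset.inner_eq_norm_of_sum_inner_eq_sum_norm {ι : Type*} {s : Finset ι} {A v : ι → E}
    (hA : ∀ i ∈ s, ‖A i‖ ≤ 1) (h : ∑ i ∈ s, ⟪A i, v i⟫_ℝ = ∑ i ∈ s, ‖v i‖) :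
    ∀ i ∈ s, ⟪A i, v i⟫_ℝ = ‖v i‖ := by
  have hle : ∀ i ∈ s, ⟪A i, v i⟫_ℝ ≤ ‖v i‖ := fun i hi =>
    (real_inner_le_norm _ _).trans (mul_le_of_le_one_left (norm_nonneg _) (hA i hi))
  exact (Finset.sum_eq_sum_iff_of_le hle).1 h

end NormSubgradient

theorem Real.log_add_log_le_two_mul_log_midpoint {a b : ℝ} (ha : 0 < a) (hb : 0 < b) :
    Real.log a + Real.log b ≤ 2 * Real.log (2⁻¹ * (a + b)) := by
  have := strictConcaveOn_log_Ioi.concaveOn.2 (Set.mem_Ioi.2 ha) (Set.mem_Ioi.2 hb)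
    (by norm_num : (0 : ℝ) ≤ 2⁻¹) (by norm_num : (0 : ℝ) ≤ 2⁻¹) (by norm_num)
  simp only [smul_eq_mul] at this
  rw [mul_add]
  linarith

theorem Real.eq_of_two_mul_log_midpoint_le {a b : ℝ} (ha : 0 < a) (hb : 0 < b)
    (h : 2 * Real.log (2⁻¹ * (a + b)) ≤ Real.log a + Real.log b) : a = b := by
  by_contra hab
  have := strictConcaveOn_log_Ioi.2 (Set.mem_Ioi.2 ha) (Set.mem_Ioi.2 hb) hab
    (by norm_num : (0 : ℝ) < 2⁻¹) (by norm_num : (0 : ℝ) < 2⁻¹) (by norm_num)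
  simp only [smul_eq_mul] at this
  rw [mul_add] at h
  linarith

theorem Finset.sum_sq_midpoint {ι : Type*} (s : Finset ι) (u v : ι → ℝ) :
    2 * ∑ i ∈ s, (2⁻¹ * (u i + v i)) ^ 2
      = ∑ i ∈ s, u i ^ 2 + ∑ i ∈ s, v i ^ 2 - 2⁻¹ * ∑ i ∈ s, (u i - v i) ^ 2 := by
  simp only [mul_sum, ← sum_add_distrib, ← sum_sub_distrib]
  exact sum_congr rfl fun i _ => by ring

theorem Matrix.eq_of_mulVec_eq_of_linearIndependent {m ι R : Type*} [Fintype ι] [CommRing R]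
    {X : Matrix m ι R} {x y : ι → R}
    (hX : LinearIndependent R fun j : {j // y j ≠ 0} => fun i => X i j.1)
    (hxy : X *ᵥ x = X *ᵥ y) (hsupp : ∀ j, y j = 0 → x j = 0) : x = y := by
  classical
  have hd : ∀ j, y j = 0 → (x - y) j = 0 := fun j hj => by simp [hj, hsupp j hj]
  have hcomb : ∑ j : {j // y j ≠ 0}, (x - y) j • (fun i => X i j.1) = 0 := by
    have hsplit := Fintype.sum_subtype_add_sum_subtype (fun j => y j ≠ 0)
      (fun j => (x - y) j • fun i => X i j)
    have hout : ∑ j : {j // ¬ y j ≠ 0}, (x - y) j • (fun i => X i j.1) = 0 :=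
      Fintype.sum_eq_zero _ fun j => by rw [hd j (not_not.1 j.2), zero_smul]
    rw [hout, add_zero] at hsplit
    rw [hsplit]
    ext i
    simpa [mulVec, dotProduct, mul_comm, mul_sub, sub_eq_zero] using congrFun hxy i
  have hzero := Fintype.linearIndependent_iff.1 hX _ hcomb
  funext j
  by_cases hj : y j = 0
  · exact sub_eq_zero.1 (hd j hj)
  · exact sub_eq_zero.1 (hzero ⟨j, hj⟩)

namespace RowSubproblem

variable {n r : ℕ}

def prefixVec (ℓ : ℕ) : (Fin r → ℝ) →ₗ[ℝ] EuclideanSpace ℝ (Fin r) where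
  toFun f := WithLp.toLp 2 fun m => if (m : ℕ) ≤ ℓ then f m else 0
  map_add' f g := by ext m; by_cases h : (m : ℕ) ≤ ℓ <;> simp [h]
  map_smul' c f := by ext m; by_cases h : (m : ℕ) ≤ ℓ <;> simp [h]

-- `groupVec w ℓ β` is the paper's `W^{(ℓ+1)} ∗ β`: groups are indexed from `0` here.
def groupVec (w : ℕ → ℕ → ℝ) (ℓ : ℕ) : (Fin r → ℝ) →ₗ[ℝ] EuclideanSpace ℝ (Fin r) :=
  prefixVec ℓ ∘ₗ LinearMap.mulLeft ℝ fun m : Fin r => w ℓ m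

@[simp]
theorem prefixVec_apply (ℓ : ℕ) (f : Fin r → ℝ) (m : Fin r) :
    prefixVec ℓ f m = if (m : ℕ) ≤ ℓ then f m else 0 := rfl

@[simp]
theorem groupVec_apply (w : ℕ → ℕ → ℝ) (ℓ : ℕ) (β : Fin r → ℝ) (m : Fin r) :
    groupVec w ℓ β m = if (m : ℕ) ≤ ℓ then w ℓ m * β m else 0 := rfl

theorem norm_prefixVec (ℓ : ℕ) (f : Fin r → ℝ) :
    ‖prefixVec ℓ f‖ = √(∑ m ∈ univ.filter (fun m : Fin r => (m : ℕ) ≤ ℓ), f m ^ 2) := by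
  rw [EuclideanSpace.norm_eq, sum_filter]
  congr 1
  refine sum_congr rfl fun m _ => ?_
  by_cases h : (m : ℕ) ≤ ℓ <;> simp [h]

theorem norm_groupVec (w : ℕ → ℕ → ℝ) (ℓ : ℕ) (β : Fin r → ℝ) :
    ‖groupVec w ℓ β‖ = √(∑ m ∈ univ.filter (fun m : Fin r => (m : ℕ) ≤ ℓ), (w ℓ m * β m) ^ 2) :=
  norm_prefixVec ℓ _

theorem inner_prefixVec_groupVec (w : ℕ → ℕ → ℝ) (ℓ : ℕ) (f d : Fin r → ℝ) :
    ⟪prefixVec ℓ f, groupVec w ℓ d⟫_ℝ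
      = ∑ j : Fin r, (if (j : ℕ) ≤ ℓ then w ℓ j else 0) * f j * d j := by
  simp only [PiLp.inner_apply, prefixVec_apply, groupVec_apply, RCLike.inner_apply, conj_trivial]
  refine sum_congr rfl fun j _ => ?_
  split_ifs <;> ring

theorem groupVec_eq_zero_iff {w : ℕ → ℕ → ℝ} {ℓ : ℕ} (hw : ∀ m : Fin r, (m : ℕ) ≤ ℓ → 0 < w ℓ m)
    {β : Fin r → ℝ} : groupVec w ℓ β = 0 ↔ ∀ m : Fin r, (m : ℕ) ≤ ℓ → β m = 0 := by
  constructor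
  · intro h m hm
    have hm0 : groupVec w ℓ β m = 0 := by rw [h]; rfl
    simpa [hm, (hw m hm).ne'] using hm0
  · intro h
    ext m
    by_cases hm : (m : ℕ) ≤ ℓ <;> simp [hm, h m]

theorem isStrictNormSubgrad_prefixVec {w : ℕ → ℕ → ℝ} {ℓ : ℕ}
    (hw : ∀ m : Fin r, (m : ℕ) ≤ ℓ → 0 < w ℓ m) {β a : Fin r → ℝ}
    (hgrad : (¬ ∀ m : Fin r, (m : ℕ) ≤ ℓ → β m = 0) → ∀ m : Fin r, (m : ℕ) ≤ ℓ →
      a m = w ℓ m * β m /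
        √(∑ m' ∈ univ.filter (fun m' : Fin r => (m' : ℕ) ≤ ℓ), (w ℓ m' * β m') ^ 2))
    (hfeas : (∀ m : Fin r, (m : ℕ) ≤ ℓ → β m = 0) →
      √(∑ m ∈ univ.filter (fun m : Fin r => (m : ℕ) ≤ ℓ), a m ^ 2) < 1) :
    IsStrictNormSubgrad (prefixVec ℓ a) (groupVec w ℓ β) := by
  by_cases hz : ∀ m : Fin r, (m : ℕ) ≤ ℓ → β m = 0
  · exact .inl ⟨(groupVec_eq_zero_iff hw).2 hz, norm_prefixVec ℓ a ▸ hfeas hz⟩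
  · refine .inr ⟨mt (groupVec_eq_zero_iff hw).1 hz, ?_⟩
    ext m
    by_cases hm : (m : ℕ) ≤ ℓ
    · simp [hm, hgrad hz m hm, norm_groupVec, div_eq_inv_mul]
    · simp [hm]

theorem apply_eq_zero_of_groupVec_eq_smul {w : ℕ → ℕ → ℝ} {ℓ : ℕ} {x y : Fin r → ℝ} {c : ℝ}
    (h : groupVec w ℓ x = c • groupVec w ℓ y) {m : Fin r} (hm : (m : ℕ) ≤ ℓ) (hw : 0 < w ℓ m)
    (hy : y m = 0) : x m = 0 := by
  have hxm := congrArg (· m) h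
  simpa [hm, hy, hw.ne'] using hxm

-- The paper's `F_r` is `objective X_{1:r} w λ k (r - 1)` with `k` the last coordinate.
noncomputable def objective (X : Matrix (Fin n) (Fin r) ℝ) (w : ℕ → ℕ → ℝ) (lam : ℝ) (k : Fin r)
    (L : ℕ) (β : Fin r → ℝ) : ℝ :=
  -2 * Real.log (β k) + (1 / (n : ℝ)) * ∑ i, (X *ᵥ β) i ^ 2
    + lam * ∑ ℓ ∈ range L, ‖groupVec w ℓ β‖

theorem apply_eq_and_mulVec_eq_of_objective_le {X : Matrix (Fin n) (Fin r) ℝ} {w : ℕ → ℕ → ℝ}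
    {lam : ℝ} (hlam : 0 ≤ lam) {k : Fin r} {L : ℕ} {x y : Fin r → ℝ} (hx : 0 < x k) (hy : 0 < y k)
    (hxy : objective X w lam k L x ≤ objective X w lam k L y)
    (hmid : objective X w lam k L y ≤ objective X w lam k L ((2⁻¹ : ℝ) • (x + y))) :
    x k = y k ∧ X *ᵥ x = X *ᵥ y := by
  have hlog := Real.log_add_log_le_two_mul_log_midpoint hx hy
  have hsq := sum_sq_midpoint univ (X *ᵥ x) (X *ᵥ y)
  have hpen : 2 * ∑ ℓ ∈ range L, ‖groupVec w ℓ ((2⁻¹ : ℝ) • (x + y))‖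
      ≤ ∑ ℓ ∈ range L, ‖groupVec w ℓ x‖ + ∑ ℓ ∈ range L, ‖groupVec w ℓ y‖ := by
    rw [mul_sum, ← sum_add_distrib]
    gcongr with ℓ
    rw [map_smul, map_add, norm_smul, Real.norm_of_nonneg (by norm_num)]
    linarith [norm_add_le (groupVec w ℓ x) (groupVec w ℓ y)]
  simp only [objective, mulVec_smul, mulVec_add, Pi.smul_apply, Pi.add_apply,
    smul_eq_mul] at hxy hmid
  have hgap : 2 * (2 * Real.log (2⁻¹ * (x k + y k)) - (Real.log (x k) + Real.log (y k)))
      + 2⁻¹ * ((1 / (n : ℝ)) * ∑ i, ((X *ᵥ x) i - (X *ᵥ y) i) ^ 2) ≤ 0 := by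
    linarith [congrArg ((1 / (n : ℝ)) * ·) hsq, mul_le_mul_of_nonneg_left hpen hlam]
  have hD : 0 ≤ (1 / (n : ℝ)) * ∑ i, ((X *ᵥ x) i - (X *ᵥ y) i) ^ 2 := by positivity
  refine ⟨Real.eq_of_two_mul_log_midpoint_le hx hy (by linarith), ?_⟩
  rcases Nat.eq_zero_or_pos n with rfl | hn
  · exact Subsingleton.elim _ _
  have hD0 : ∑ i, ((X *ᵥ x) i - (X *ᵥ y) i) ^ 2 = 0 := by
    have : (1 / (n : ℝ)) * ∑ i, ((X *ᵥ x) i - (X *ᵥ y) i) ^ 2 = 0 := by linarith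
    exact (mul_eq_zero.1 this).resolve_left (by positivity)
  funext i
  exact sub_eq_zero.1 <| pow_eq_zero_iff two_ne_zero |>.1 <|
    (sum_eq_zero_iff_of_nonneg fun i _ => sq_nonneg _).1 hD0 i (mem_univ i)

theorem sum_inner_prefixVec_groupVec_eq_zero {X : Matrix (Fin n) (Fin r) ℝ} {w : ℕ → ℕ → ℝ}
    {lam : ℝ} (hlam : lam ≠ 0) {k : Fin r} {L : ℕ} {c : ℝ} {β d : Fin r → ℝ}
    {a : ℕ → Fin r → ℝ}
    (hstat : ∀ j : Fin r, c * (if j = k then 1 else 0) + (2 / (n : ℝ)) * ((Xᵀ * X) *ᵥ β) j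
        + lam * ∑ ℓ ∈ range L, (if (j : ℕ) ≤ ℓ then w ℓ j else 0) * a ℓ j = 0)
    (hdk : d k = 0) (hXd : X *ᵥ d = 0) :
    ∑ ℓ ∈ range L, ⟪prefixVec ℓ (a ℓ), groupVec w ℓ d⟫_ℝ = 0 := by
  have hquad : ((Xᵀ * X) *ᵥ β) ⬝ᵥ d = 0 := by
    rw [← mulVec_mulVec, mulVec_transpose, ← dotProduct_mulVec, hXd, dotProduct_zero]
  have hpair : ∑ j, (c * (if j = k then 1 else 0) + (2 / (n : ℝ)) * ((Xᵀ * X) *ᵥ β) j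
        + lam * ∑ ℓ ∈ range L, (if (j : ℕ) ≤ ℓ then w ℓ j else 0) * a ℓ j) * d j
      = c * d k + (2 / (n : ℝ)) * (((Xᵀ * X) *ᵥ β) ⬝ᵥ d)
        + lam * ∑ ℓ ∈ range L, ⟪prefixVec ℓ (a ℓ), groupVec w ℓ d⟫_ℝ := by
    simp only [inner_prefixVec_groupVec, add_mul, sum_add_distrib, dotProduct, mul_sum, sum_mul]
    rw [sum_comm (s := range L)]
    simp [mul_assoc]
  rw [sum_eq_zero fun j _ => by rw [hstat j, zero_mul], hdk, hquad] at hpair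
  simpa [hlam] using hpair.symm

end RowSubproblem

open RowSubproblem

/-- Lemma `theory:uniqueness`: under the KKT conditions with strict dual
feasibility on the leading zero groups of `β̂`, if the columns of `X_{1:r}` indexed by the
support `Ŝ = {i : β̂ i ≠ 0}` are linearly independent (full column rank), then `β̂` is the
unique minimizer of the `r`-th row subproblem. -/
theorem stmt_9 (n r : ℕ) (hr2 : 2 ≤ r)
    (lam : ℝ) (hlam : 0 < lam)
    (w : ℕ → ℕ → ℝ) (hw : ∀ ℓ m : ℕ, m ≤ ℓ → ℓ < r - 1 → 0 < w ℓ m)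
    (Xr : Matrix (Fin n) (Fin r) ℝ)
    (F : (Fin r → ℝ) → ℝ)
    (hF : ∀ β : Fin r → ℝ,
      F β = -2 * Real.log (β ⟨r - 1, by omega⟩)
        + (1 / (n : ℝ)) * ∑ i : Fin n, (Xr.mulVec β i) ^ 2
        + lam * ∑ ℓ ∈ Finset.range (r - 1),
            Real.sqrt (∑ m ∈ Finset.univ.filter (fun m : Fin r => (m : ℕ) ≤ ℓ),
              w ℓ (m : ℕ) ^ 2 * β m ^ 2))
    (βh : Fin r → ℝ) (hβpos : 0 < βh ⟨r - 1, by omega⟩)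
    (hmin : ∀ β : Fin r → ℝ, 0 < β ⟨r - 1, by omega⟩ → F βh ≤ F β)
    (a : ℕ → Fin r → ℝ)
    -- KKT conditions for (β̂, a):
    (hstat : ∀ j : Fin r,
      -(2 / βh ⟨r - 1, by omega⟩) * (if j = (⟨r - 1, by omega⟩ : Fin r) then 1 else 0)
        + (2 / (n : ℝ)) * ((Xrᵀ * Xr).mulVec βh j)
        + lam * ∑ ℓ ∈ Finset.range (r - 1),
            (if (j : ℕ) ≤ ℓ then w ℓ (j : ℕ) else 0) * a ℓ j = 0)
    (hagrad : ∀ ℓ, ℓ < r - 1 → (¬ ∀ m : Fin r, (m : ℕ) ≤ ℓ → βh m = 0) →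
      ∀ m : Fin r, (m : ℕ) ≤ ℓ →
        a ℓ m = w ℓ (m : ℕ) * βh m /
          Real.sqrt (∑ m' ∈ Finset.univ.filter (fun m' : Fin r => (m' : ℕ) ≤ ℓ),
            (w ℓ (m' : ℕ) * βh m') ^ 2))
    -- J = J(β̂), the length of the leading zero block of β̂:
    (J : ℕ)
    (hJmax : ∀ h : J < r - 1, βh ⟨J, by omega⟩ ≠ 0)
    -- strict dual feasibility on the zero groups:
    (hstrict : ∀ ℓ, ℓ < J →
      Real.sqrt (∑ m ∈ Finset.univ.filter (fun m : Fin r => (m : ℕ) ≤ ℓ), a ℓ m ^ 2) < 1)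
    -- the columns of X_{1:r} indexed by the support of β̂ have full column rank:
    (hrank : LinearIndependent ℝ
      (fun j : {j : Fin r // βh j ≠ 0} => fun i : Fin n => Xr i j.1)) :
    ∀ βt : Fin r → ℝ, 0 < βt ⟨r - 1, by omega⟩ →
      (∀ β : Fin r → ℝ, 0 < β ⟨r - 1, by omega⟩ → F βt ≤ F β) →
      βt = βh := by
  intro βt hβt hmin'
  set k : Fin r := ⟨r - 1, by omega⟩
  have hobj : ∀ β, F β = objective Xr w lam k (r - 1) β := fun β => by
    simp only [hF, objective, norm_groupVec, mul_pow]
  obtain ⟨hk, hX⟩ := apply_eq_and_mulVec_eq_of_objective_le hlam.le hβt hβpos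
    (by simpa only [hobj] using hmin' βh hβpos)
    (by simpa only [hobj] using hmin _ (by simp only [Pi.smul_apply, Pi.add_apply]; positivity))
  have hpen :
      ∑ ℓ ∈ range (r - 1), ‖groupVec w ℓ βt‖ = ∑ ℓ ∈ range (r - 1), ‖groupVec w ℓ βh‖ := by
    have hF_eq := (hmin' βh hβpos).antisymm (hmin βt hβt)
    simp only [hobj, objective, hk, hX] at hF_eq
    exact mul_left_cancel₀ hlam.ne' (by linarith)
  have hsub : ∀ ℓ ∈ range (r - 1),
      IsStrictNormSubgrad (prefixVec ℓ (a ℓ)) (groupVec w ℓ βh) := fun ℓ hℓ => by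
    rw [mem_range] at hℓ
    refine isStrictNormSubgrad_prefixVec (fun m hm => hw ℓ m hm hℓ) (hagrad ℓ hℓ)
      fun hz => hstrict ℓ ?_
    by_contra! hJ
    exact hJmax (by omega) (hz _ hJ)
  have hpair := sum_inner_prefixVec_groupVec_eq_zero (d := βt - βh) hlam.ne' hstat
    (by simp [hk]) (by rw [mulVec_sub, hX, sub_self])
  simp only [map_sub, inner_sub_right, sum_sub_distrib, sub_eq_zero] at hpair
  have htight := inner_eq_norm_of_sum_inner_eq_sum_norm (fun ℓ hℓ => (hsub ℓ hℓ).norm_le_one) <| by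
    rw [hpair, hpen]
    exact sum_congr rfl fun ℓ hℓ => (hsub ℓ hℓ).inner_eq_norm
  -- the last group `{0, …, r - 2}` contains every index but `k`
  have htop : r - 2 ∈ range (r - 1) := mem_range.2 (by omega)
  obtain ⟨c, hc⟩ := (hsub _ htop).exists_eq_smul_of_inner_eq_norm (htight _ htop)
  refine eq_of_mulVec_eq_of_linearIndependent hrank hX fun j hj => ?_
  have hjk : (j : ℕ) ≤ r - 2 := by
    have hjk : (j : ℕ) ≠ r - 1 := fun h => hβpos.ne' ((Fin.ext h : j = k) ▸ hj)
    omega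
  exact apply_eq_zero_of_groupVec_eq_smul hc hjk (hw _ _ hjk (by omega)) hj
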